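/- Let T be an irreducible toric trinity with n black triangles. Then for any state s lying in a cyclic connected component of the state transition graph of T, there is a linear ordering Δ_1, …, Δ_n of the black triangles of T such that, starting from s, clockwise moves can be performed on Δ_1, …, Δ_n consecutively in that order (each triangle being changed exactly once), and after these n moves the state s recurs. -/

import Mathlib

/-!  Combinatorial trinities, Tutte matchings (states), and clock moves,
following Hine and Kálmán, "Clock theorems for triangulated surfaces".

A trinity is encoded combinatorially: `Vertex` is the set of vertices, properly
colored by `vcol` with colors `Fin 3` (0 = red, 1 = green, 2 = blue); `White`
and `Black` are the sets of white and black triangles.  Each triangle has one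
vertex of each color (`wvert`, `bvert`) and one edge of each color (the edge of
color `c` being opposite the vertex of color `c`); across its edge of color `c`
a white triangle `w` meets the black triangle `wadj w c`, and a black triangle
`b` meets the white triangle `badj b c`.  The two triangles sharing an edge of
color `c` share their vertices of the other two colors (`bvert_wadj`).
A planar trinity carries a distinguished outer white triangle (`outer = some o`);
for a toric trinity `outer = none`. -/

structure Trinity where
  Vertex : Type
  White : Type
  Black : Type
  [vertexFintype : Fintype Vertex]
  [whiteFintype : Fintype White]
  [blackFintype : Fintype Black]
  [vertexDecEq : DecidableEq Vertex]
  [whiteDecEq : DecidableEq White]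
  [blackDecEq : DecidableEq Black]
  outer : Option White
  vcol : Vertex → Fin 3
  wvert : White → Fin 3 → Vertex
  bvert : Black → Fin 3 → Vertex
  wadj : White → Fin 3 → Black
  badj : Black → Fin 3 → White
  wvert_col : ∀ w c, vcol (wvert w c) = c
  bvert_col : ∀ b c, vcol (bvert b c) = c
  badj_wadj : ∀ w c, badj (wadj w c) c = w
  wadj_badj : ∀ b c, wadj (badj b c) c = b
  bvert_wadj : ∀ w c c', c' ≠ c → bvert (wadj w c) c' = wvert w c'

attribute [instance] Trinity.vertexFintype Trinity.whiteFintype Trinity.blackFintype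
  Trinity.vertexDecEq Trinity.whiteDecEq Trinity.blackDecEq

namespace Trinity

variable (T : Trinity)

/-- `w` is the outer white triangle. -/
def IsOuter (w : T.White) : Prop := T.outer = some w

instance : DecidablePred T.IsOuter := fun w => decidable_of_iff (T.outer = some w) Iff.rfl

/-- `v` is a root, i.e. a vertex of the outer white triangle (planar case). -/
def IsRoot (v : T.Vertex) : Prop := ∃ w, T.IsOuter w ∧ ∃ c, v = T.wvert w c

/-- A Tutte matching (state): a perfect matching between the non-outer white
triangles and incident non-root vertices.  (For a toric trinity, `IsOuter` and
`IsRoot` are empty conditions, so this is a perfect matching between all white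
triangles and all vertices.)  The value on the outer white triangle, if any, is
irrelevant and is normalized by `outer_spec`. -/
structure State where
  toFun : T.White → T.Vertex
  incident : ∀ w, ∃ c, toFun w = T.wvert w c
  injOn : ∀ w w', ¬ T.IsOuter w → ¬ T.IsOuter w' → toFun w = toFun w' → w = w'
  not_root : ∀ w, ¬ T.IsOuter w → ¬ T.IsRoot (toFun w)
  surj : ∀ v, ¬ T.IsRoot v → ∃ w, ¬ T.IsOuter w ∧ toFun w = v
  outer_spec : ∀ w, T.IsOuter w → toFun w = T.wvert w 0

namespace State

variable {T}

/-- The black triangle through which the arrow representing the match of the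
white triangle `w` passes: the arrow of the match `(w, s w)` crosses the edge
of `w` opposite the matched vertex `s w` (the edge of color `vcol (s w)`). -/
def arrowBlack (s : T.State) (w : T.White) : T.Black := T.wadj w (T.vcol (s.toFun w))

/-- The black triangle `b` is empty in the state `s`: no arrow passes through it. -/
def EmptyAt (s : T.State) (b : T.Black) : Prop :=
  ∀ w, ¬ T.IsOuter w → s.arrowBlack w ≠ b

/-- `b` is a clockwise empty black triangle of `s`:  it is empty and its three
vertices are matched with the three adjacent white triangles in the clockwise
rotational pattern. -/
def IsCW (s : T.State) (b : T.Black) : Prop :=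
  s.EmptyAt b ∧ ∀ c, s.toFun (T.badj b c) = T.bvert b (c + 1)

/-- `b` is a counter-clockwise empty black triangle of `s`. -/
def IsCCW (s : T.State) (b : T.Black) : Prop :=
  s.EmptyAt b ∧ ∀ c, s.toFun (T.badj b c) = T.bvert b (c + 2)

end State

/-- The basic clockwise move (clock move) about the empty black triangle `b`,
turning it from clockwise to counter-clockwise: `t` is obtained from `s` by
changing `b`. -/
def CWMoveAt (s t : T.State) (b : T.Black) : Prop :=
  s.IsCW b ∧ (∀ c, t.toFun (T.badj b c) = T.bvert b (c + 2)) ∧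
    ∀ w, (∀ c, w ≠ T.badj b c) → t.toFun w = s.toFun w

/-- A walk in the state transition graph, recording for each step the black
triangle about which the move is performed and the direction of the move
(`true` = clockwise, `false` = counter-clockwise). -/
inductive Walk : T.State → List (T.Black × Bool) → T.State → Prop
  | nil (s : T.State) : Walk s [] s
  | cw {s t u : T.State} {b : T.Black} {l : List (T.Black × Bool)} :
      T.CWMoveAt s t b → Walk t l u → Walk s ((b, true) :: l) u
  | ccw {s t u : T.State} {b : T.Black} {l : List (T.Black × Bool)} :
      T.CWMoveAt t s b → Walk t l u → Walk s ((b, false) :: l) u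

/-- Two states lie in the same connected component of the state transition
graph. -/
def Reaches (s t : T.State) : Prop := ∃ l, T.Walk s l t

/-- A walk consisting of clockwise moves only, about the listed black triangles. -/
def CWWalk (s : T.State) (l : List T.Black) (t : T.State) : Prop :=
  T.Walk s (l.map fun b => (b, true)) t

/-- A state is recurrent if some non-empty sequence of clockwise moves starts
and ends at it. -/
def Recurrent (s : T.State) : Prop := ∃ l : List T.Black, l ≠ [] ∧ T.CWWalk s l s

/-- `s` belongs to an acyclic component of the state transition graph: no state
in its component is recurrent. -/
def InAcyclic (s : T.State) : Prop := ∀ t, T.Reaches s t → ¬ T.Recurrent t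

/-- Two white triangles sharing an adjacent black triangle. -/
def WAdj (w w' : T.White) : Prop := ∃ c c', T.wadj w c = T.wadj w' c'

/-- Rotation (by one step, in the direction induced by the orientation) of the
white triangles around the vertex `v`. -/
def rotAt (v : T.Vertex) (w : T.White) : T.White :=
  T.badj (T.wadj w (T.vcol v + 1)) (T.vcol v + 2)

/-- The combinatorial data encode a closed connected oriented surface: the
triangles form a connected complex and the link of every vertex is a single
cycle of triangles. -/
def Surface : Prop :=
  (∀ w w' : T.White, Relation.ReflTransGen T.WAdj w w') ∧
  ∀ (v : T.Vertex) (w w' : T.White), T.wvert w (T.vcol v) = v → T.wvert w' (T.vcol v) = v →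
    ∃ k : ℕ, (T.rotAt v)^[k] w = w'

/-- A planar trinity: a trinity on the sphere (Euler characteristic 2) with a
distinguished outer white triangle. -/
def Planar : Prop :=
  T.Surface ∧ T.outer.isSome ∧ Fintype.card T.Vertex = Fintype.card T.White + 2

/-- A toric trinity: a trinity on the torus (Euler characteristic 0), with all
triangles and vertices taking part in matchings. -/
def Toric : Prop :=
  T.Surface ∧ T.outer = none ∧ Fintype.card T.Vertex = Fintype.card T.White

/-- The configuration of a general clock move: three white triangles `W 0, W 1,
W 2` and three vertices `u 0, u 1, u 2` (one of each color) such that `W c`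
contains the vertices `u c'` for both colors `c' ≠ c`; the three edges of
colors `c` of the triangles `W c` then form a closed triangle of edges through
the vertices `u`, bounding a disk on the side opposite to the whites.
(For the boundary of a black triangle `b` this recovers `W = T.badj b`,
`u = T.bvert b`.) -/
def CombConfig (W : Fin 3 → T.White) (u : Fin 3 → T.Vertex) : Prop :=
  ∀ c c' : Fin 3, c' ≠ c → T.wvert (W c) c' = u c'

/-- A general clockwise move from `s` to `t`: about some clock-move
configuration whose three (non-outer) white triangles are matched with its
three vertices, the matching is switched from the clockwise pattern to the
counter-clockwise one, all other matches being kept. -/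
def CWMove (s t : T.State) : Prop :=
  ∃ (W : Fin 3 → T.White) (u : Fin 3 → T.Vertex),
    T.CombConfig W u ∧ (∀ c, ¬ T.IsOuter (W c)) ∧
    (∀ c, s.toFun (W c) = u (c + 1)) ∧ (∀ c, t.toFun (W c) = u (c + 2)) ∧
    ∀ w, (∀ c, w ≠ W c) → t.toFun w = s.toFun w

/-- `P` exhibits the closed triangle of edges determined by the clock-move
configuration `W` as separating: `P` is a two-coloring of the triangles which
changes value exactly across the three edges of the configuration, the white
triangles `W c` being on the `P`-side. -/
def ConfigCut (W : Fin 3 → T.White) (P : T.White ⊕ T.Black → Prop) : Prop :=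
  (∀ (w : T.White) (c : Fin 3), (∀ c₀, ¬ (w = W c₀ ∧ c = c₀)) →
    (P (Sum.inl w) ↔ P (Sum.inr (T.wadj w c)))) ∧
  (∀ c, P (Sum.inl (W c))) ∧ (∀ c, ¬ P (Sum.inr (T.wadj (W c) c)))

/-- A trinity is irreducible if it is not the trinity `F` with a single black
and a single white triangle, and it is not a nontrivial connected sum; i.e.
every separating closed triangle of edges cuts off a single triangle. -/
def Irreducible : Prop :=
  1 < Fintype.card T.White ∧
  ∀ (W : Fin 3 → T.White) (u : Fin 3 → T.Vertex) (P : T.White ⊕ T.Black → Prop),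
    T.CombConfig W u → T.ConfigCut W P →
      (∃ b : T.Black, ∀ x, ¬ P x ↔ x = Sum.inr b) ∨
      (∃ w : T.White, ∀ x, P x ↔ x = Sum.inl w)

/-! ### The directed dual graphs `G_X^*`

For a color `X`, the vertices of the directed graph `G_X^*` are the vertices of
the trinity of color `X` and its directed edges are in natural bijection with
the white triangles: the white triangle `w` corresponds to the dual edge of its
edge of color `X`, directed from the vertex of color `X` of the adjacent black
triangle `wadj w X` (its tail) to the vertex of color `X` of `w` (its head).
The arrows of a state pointing to vertices of color `X` are edges of `G_X^*`. -/

/-- The head of the edge of `G_X^*` corresponding to the white triangle `w`. -/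
def head (X : Fin 3) (w : T.White) : T.Vertex := T.wvert w X

/-- The tail of the edge of `G_X^*` corresponding to the white triangle `w`. -/
def tail (X : Fin 3) (w : T.White) : T.Vertex := T.bvert (T.wadj w X) X

/-- One-step reachability in `G_X^*` along edges from the set `A`. -/
def ARel (X : Fin 3) (A : Finset T.White) (a b : T.Vertex) : Prop :=
  ∃ w ∈ A, T.tail X w = a ∧ T.head X w = b

/-- `A` is a spanning arborescence of `G_X^*`, rooted at the root of color `X`
(the vertex of color `X` of the outer triangle `o`): a spanning tree all of
whose edges point away from the root. -/
def IsArborescence (X : Fin 3) (o : T.White) (A : Finset T.White) : Prop :=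
  (∀ w ∈ A, T.head X w ≠ T.wvert o X) ∧
  (∀ v : T.Vertex, T.vcol v = X → v ≠ T.wvert o X → ∃! w, w ∈ A ∧ T.head X w = v) ∧
  (∀ v : T.Vertex, T.vcol v = X → Relation.ReflTransGen (T.ARel X A) (T.wvert o X) v)

/-- One step of the tour tracing (counter-clockwise) the boundary of a small
neighborhood of the spanning tree `A` in `G_X^*`.  A position of the tour is a
dart `(w, d)`: the edge `w` of `G_X^*` together with a direction (`true`:
towards the head, `false`: towards the tail).  From the end of the dart one
rotates to the next edge-end around the vertex; if that edge belongs to `A` it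
is traversed away from the vertex, and otherwise its end is crossed (recorded
by bouncing back towards the vertex). -/
def tourStep (X : Fin 3) (A : Finset T.White) : T.White × Bool → T.White × Bool :=
  fun p =>
    if p.2 then
      let w' := T.badj (T.wadj p.1 (X + 1)) X
      (w', decide (w' ∈ A))
    else
      let w' := T.badj (T.wadj p.1 X) (X + 2)
      (w', decide (w' ∉ A))

/-- The position of the edge `w` of `G_X^*` in the ordering `<_A` determined by
the spanning arborescence `A`: the first time the boundary tour of a
neighborhood of `A` (started on the outer white triangle `o`, i.e. at the dart
arriving at the root through `o`) travels along `w` (if `w ∈ A`) or crosses an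
end of `w` (if `w ∉ A`). -/
noncomputable def ordIdx (X : Fin 3) (o : T.White) (A : Finset T.White) (w : T.White) : ℕ :=
  sInf {k : ℕ | ((T.tourStep X A)^[k] (o, true)).1 = w}

/-- `A` is the clocked arborescence of `G_X^*`: the spanning arborescence such
that for every non-root vertex `y` of color `X`, the edge of `A` pointing to
`y` is smallest, with respect to the ordering `<_A`, among all edges of
`G_X^*` terminating at `y`. -/
def IsClocked (X : Fin 3) (o : T.White) (A : Finset T.White) : Prop :=
  T.IsArborescence X o A ∧
    ∀ w ∈ A, ∀ w' : T.White, w' ≠ w → T.head X w' = T.head X w →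
      T.ordIdx X o A w < T.ordIdx X o A w'

/-! ### Wreaths (toric trinities) -/

/-- A nonempty set `C` of edges of `G_R^*` forming a single (directed) cycle:
at every red vertex the in-degree and out-degree in `C` agree and are at most
one, and `C` is connected. -/
def IsDirCycle (C : Finset T.White) : Prop :=
  C.Nonempty ∧
  (∀ v : T.Vertex, T.vcol v = 0 →
    (C.filter fun w => T.head 0 w = v).card = (C.filter fun w => T.tail 0 w = v).card ∧
    (C.filter fun w => T.head 0 w = v).card ≤ 1) ∧
  ∀ w ∈ C, ∀ w' ∈ C,
    Relation.ReflTransGen (fun a b => a ∈ C ∧ b ∈ C ∧ T.head 0 a = T.tail 0 b) w w'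

/-- The cycle `C` of edges of `G_R^*` separates the surface: the faces of
`G_R^*` (which correspond to the green and blue vertices of the trinity) can be
two-colored so that the two faces adjacent along an edge of `G_R^*` (namely the
faces of the green and the blue endpoint of the crossed red edge) get the same
color exactly when the edge does not belong to `C`. -/
def SeparatingSet (C : Finset T.White) : Prop :=
  ∃ P : T.Vertex → Prop,
    (∀ w : T.White, w ∉ C → (P (T.wvert w 1) ↔ P (T.wvert w 2))) ∧
    ∀ w ∈ C, ¬ (P (T.wvert w 1) ↔ P (T.wvert w 2))

/-- A wreath: a set `W` of edges of the directed dual graph `G_R^*` such that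
every red vertex has exactly one edge of `W` pointing to it and the edges of
`W` form no separating cycle. -/
def IsWreath (W : Finset T.White) : Prop :=
  (∀ v : T.Vertex, T.vcol v = 0 → ∃! w, w ∈ W ∧ T.head 0 w = v) ∧
  ∀ C ⊆ W, T.IsDirCycle C → ¬ T.SeparatingSet C

end Trinity

/-!
A state is recorded by the *phase* of each white triangle, the color of its matched vertex, and a
clockwise move about `b` advances the phases of the three white triangles around `b` by one. Along
a path of clockwise moves a white triangle is therefore rotated by its three black neighbours in
cyclic order. On a cycle every phase returns, so a white triangle that is rotated at all is rotated
a positive multiple of three times, hence by all of its neighbours; by connectedness every black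
triangle is moved. A move about `b` commutes with the moves of a cycle up to the first occurrence
of `b` (or after its last one), which makes recurrence invariant under moves in both directions.
Finally, keeping only the first occurrence of each move of a cycle still gives a path, and it
rotates every white triangle exactly three times, so it returns to the start.
-/

theorem List.reverse_dedup_reverse_concat {α : Type*} [DecidableEq α] (l : List α) (a : α) :
    (l ++ [a]).reverse.dedup.reverse =
      if a ∈ l then l.reverse.dedup.reverse else l.reverse.dedup.reverse ++ [a] := by
  split_ifs with ha
  · simp [List.dedup_cons_of_mem (List.mem_reverse.mpr ha)]
  · simp [List.dedup_cons_of_notMem (mt List.mem_reverse.mp ha)]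

theorem List.countP_eq_card_filter_univ {α : Type*} [Fintype α] (p : α → Prop) [DecidablePred p]
    {l : List α} (hl : l.Nodup) (h : ∀ a, a ∈ l) :
    l.countP (fun a => decide (p a)) = (Finset.univ.filter p).card := by
  rw [← Finset.eq_univ_of_forall (s := ⟨(l : Multiset α), hl⟩) h, Finset.card_def,
    Finset.filter_val, ← Multiset.countP_eq_card_filter]
  rfl

namespace Trinity

open Fin.NatCast Fin.CommRing

variable {T : Trinity}

lemma wvert_injective (w : T.White) : Function.Injective (T.wvert w) := fun c c' h => by
  simpa only [T.wvert_col] using congrArg T.vcol h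

lemma bvert_eq_wvert_badj (b : T.Black) {c c' : Fin 3} (h : c' ≠ c) :
    T.bvert b c' = T.wvert (T.badj b c) c' := by
  simpa only [T.wadj_badj] using T.bvert_wadj (T.badj b c) c c' h

lemma not_isOuter (hout : T.outer = none) (w : T.White) : ¬ T.IsOuter w := by
  simp [IsOuter, hout]

lemma not_isRoot (hout : T.outer = none) (v : T.Vertex) : ¬ T.IsRoot v := by
  rintro ⟨w, hw, -⟩
  exact not_isOuter hout w hw

def Incident (b : T.Black) (w : T.White) : Prop := ∃ c, T.badj b c = w

instance (b : T.Black) (w : T.White) : Decidable (Incident b w) :=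
  Fintype.decidableExistsFintype

lemma incident_iff {b : T.Black} {w : T.White} : Incident b w ↔ ∃ c, T.wadj w c = b :=
  ⟨fun ⟨c, hc⟩ => ⟨c, hc ▸ T.wadj_badj b c⟩, fun ⟨c, hc⟩ => ⟨c, hc ▸ T.badj_wadj w c⟩⟩

lemma incident_wadj (w : T.White) (c : Fin 3) : Incident (T.wadj w c) w :=
  incident_iff.mpr ⟨c, rfl⟩

namespace State

/-- The color of the vertex matched to `w`; it determines the match, as `w` has one vertex of
each color. -/
def phase (s : T.State) (w : T.White) : Fin 3 := T.vcol (s.toFun w)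

lemma toFun_eq_wvert_phase (s : T.State) (w : T.White) : s.toFun w = T.wvert w (s.phase w) := by
  obtain ⟨c, hc⟩ := s.incident w
  rw [phase, hc, T.wvert_col]

lemma toFun_eq_wvert_iff {s : T.State} {w : T.White} {c : Fin 3} :
    s.toFun w = T.wvert w c ↔ s.phase w = c := by
  rw [toFun_eq_wvert_phase, (wvert_injective w).eq_iff]

lemma ext_phase {s t : T.State} (h : ∀ w, s.phase w = t.phase w) : s = t := by
  have hfun : s.toFun = t.toFun := funext fun w => by
    rw [toFun_eq_wvert_phase, h, ← toFun_eq_wvert_phase]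
  cases s; cases t; cases hfun; rfl

lemma isCW_iff {s : T.State} {b : T.Black} :
    s.IsCW b ↔ ∀ c, s.phase (T.badj b c) = c + 1 := by
  have hpattern : ∀ c, s.toFun (T.badj b c) = T.bvert b (c + 1) ↔ s.phase (T.badj b c) = c + 1 :=
    fun c => by rw [bvert_eq_wvert_badj b (c := c) (by simp), toFun_eq_wvert_iff]
  simp only [IsCW, hpattern, and_iff_right_iff_imp]
  intro h w _ hw
  have hwb : T.badj b (s.phase w) = w := by rw [← hw]; exact T.badj_wadj w _
  have := h (s.phase w)
  rw [hwb] at this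
  simp at this

lemma IsCW.badj_injective {s : T.State} {b : T.Black} (h : s.IsCW b) :
    Function.Injective (T.badj b) := fun c c' hc => by
  have := isCW_iff.mp h
  simpa [hc, this c'] using (this c).symm

def permute (hout : T.outer = none) (s : T.State) (σ : T.White ≃ T.White)
    (hσ : ∀ w, ∃ c, s.toFun (σ w) = T.wvert w c) : T.State where
  toFun := s.toFun ∘ σ
  incident := hσ
  injOn _ _ _ _ h := σ.injective (s.injOn _ _ (not_isOuter hout _) (not_isOuter hout _) h)
  not_root _ _ := not_isRoot hout _
  surj v _ := by
    obtain ⟨w, -, hw⟩ := s.surj v (not_isRoot hout v)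
    exact ⟨σ.symm w, not_isOuter hout _, by simp [hw]⟩
  outer_spec w hw := absurd hw (not_isOuter hout w)

/-- In a clockwise pattern `badj b c` is matched to the vertex of color `c + 1`, so this sends
`badj b c` to `badj b (c + 1)`; precomposing a state with it performs the move about `b`. -/
def rotateAround (s : T.State) (b : T.Black) (w : T.White) : T.White :=
  if Incident b w then T.badj b (s.phase w) else w

lemma rotateAround_badj {s : T.State} {b : T.Black} (h : s.IsCW b) (c : Fin 3) :
    s.rotateAround b (T.badj b c) = T.badj b (c + 1) := by
  rw [rotateAround, if_pos ⟨c, rfl⟩, isCW_iff.mp h c]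

lemma rotateAround_of_not_incident (s : T.State) {b : T.Black} {w : T.White}
    (hw : ¬ Incident b w) : s.rotateAround b w = w := if_neg hw

lemma rotateAround_injective {s : T.State} {b : T.Black} (h : s.IsCW b) :
    Function.Injective (s.rotateAround b) := by
  intro w w' hww'
  by_cases hw : Incident b w <;> by_cases hw' : Incident b w'
  · obtain ⟨c, rfl⟩ := hw
    obtain ⟨c', rfl⟩ := hw'
    rw [rotateAround_badj h, rotateAround_badj h] at hww'
    rw [add_right_cancel (h.badj_injective hww')]
  · obtain ⟨c, rfl⟩ := hw
    rw [rotateAround_badj h, rotateAround_of_not_incident s hw'] at hww'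
    exact absurd ⟨c + 1, hww'⟩ hw'
  · obtain ⟨c', rfl⟩ := hw'
    rw [rotateAround_badj h, rotateAround_of_not_incident s hw] at hww'
    exact absurd ⟨c' + 1, hww'.symm⟩ hw
  · rwa [rotateAround_of_not_incident s hw, rotateAround_of_not_incident s hw'] at hww'

lemma toFun_rotateAround_badj {s : T.State} {b : T.Black} (h : s.IsCW b) (c : Fin 3) :
    s.toFun (s.rotateAround b (T.badj b c)) = T.bvert b (c + 2) := by
  have hphase : s.phase (T.badj b (c + 1)) = c + 2 := by
    rw [isCW_iff.mp h]
    grind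
  rw [rotateAround_badj h, toFun_eq_wvert_phase, hphase, ← bvert_eq_wvert_badj b (by simp)]

end State

lemma exists_cwMoveAt (hout : T.outer = none) {s : T.State} {b : T.Black} (h : s.IsCW b) :
    ∃ t, T.CWMoveAt s t b := by
  let σ := Equiv.ofBijective _ (Finite.injective_iff_bijective.mp (State.rotateAround_injective h))
  have hσ : ∀ w, ∃ c, s.toFun (σ w) = T.wvert w c := by
    intro w
    by_cases hw : Incident b w
    · obtain ⟨c, rfl⟩ := hw
      exact ⟨c + 2, by
        rw [Equiv.ofBijective_apply, State.toFun_rotateAround_badj h,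
          bvert_eq_wvert_badj b (c := c) (by simp)]⟩
    · simpa [σ, State.rotateAround_of_not_incident s hw] using s.incident w
  refine ⟨s.permute hout σ hσ, h, fun c => State.toFun_rotateAround_badj h c, fun w hw => ?_⟩
  simp [State.permute, σ, State.rotateAround_of_not_incident s fun ⟨c, hc⟩ => hw c hc.symm]

lemma cwWalk_nil_iff {s t : T.State} : T.CWWalk s [] t ↔ s = t := by
  refine ⟨fun h => ?_, fun h => h ▸ Walk.nil s⟩
  cases h
  rfl

lemma cwWalk_cons_iff {s u : T.State} {b : T.Black} {l : List T.Black} :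
    T.CWWalk s (b :: l) u ↔ ∃ t, T.CWMoveAt s t b ∧ T.CWWalk t l u := by
  refine ⟨fun h => ?_, fun ⟨_, hmove, hl⟩ => Walk.cw hmove hl⟩
  cases h with
  | cw hmove hl => exact ⟨_, hmove, hl⟩

lemma cwWalk_singleton_iff {s t : T.State} {b : T.Black} :
    T.CWWalk s [b] t ↔ T.CWMoveAt s t b := by
  simp [cwWalk_cons_iff, cwWalk_nil_iff]

lemma cwWalk_append_iff {s u : T.State} {l₁ l₂ : List T.Black} :
    T.CWWalk s (l₁ ++ l₂) u ↔ ∃ t, T.CWWalk s l₁ t ∧ T.CWWalk t l₂ u := by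
  induction l₁ generalizing s with
  | nil => simp [cwWalk_nil_iff]
  | cons b l ih => simp only [List.cons_append, cwWalk_cons_iff, ih]; grind

def turns (w : T.White) (l : List T.Black) : ℕ := l.countP fun b => Incident b w

lemma turns_cons (w : T.White) (b : T.Black) (l : List T.Black) :
    turns w (b :: l) = turns w l + if Incident b w then 1 else 0 := by
  simp [turns, List.countP_cons]

lemma turns_ne_zero {w : T.White} {b : T.Black} {l : List T.Black} (hb : b ∈ l)
    (hw : Incident b w) : turns w l ≠ 0 :=
  (List.countP_pos_iff.mpr ⟨b, hb, decide_eq_true hw⟩).ne'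

lemma CWMoveAt.phase_badj {s t : T.State} {b : T.Black} (h : T.CWMoveAt s t b) (c : Fin 3) :
    t.phase (T.badj b c) = c + 2 :=
  State.toFun_eq_wvert_iff.mp (by rw [h.2.1 c, bvert_eq_wvert_badj b (c := c) (by simp)])

lemma CWMoveAt.phase_eq {s t : T.State} {b : T.Black} (h : T.CWMoveAt s t b) (w : T.White) :
    t.phase w = s.phase w + if Incident b w then 1 else 0 := by
  split_ifs with hw
  · obtain ⟨c, rfl⟩ := hw
    rw [State.isCW_iff.mp h.1 c, h.phase_badj c]
    grind
  · rw [add_zero, State.phase, h.2.2 w fun c hc => hw ⟨c, hc.symm⟩, State.phase]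

lemma CWWalk.phase_eq {s t : T.State} {l : List T.Black} (h : T.CWWalk s l t) (w : T.White) :
    t.phase w = s.phase w + (turns w l : Fin 3) := by
  induction l generalizing s with
  | nil => simp [cwWalk_nil_iff.mp h, turns]
  | cons b l ih =>
    obtain ⟨s', hmove, hl⟩ := cwWalk_cons_iff.mp h
    rw [ih hl, hmove.phase_eq, turns_cons]
    split_ifs <;> push_cast <;> ring

lemma CWWalk.eq_of_perm {s t t' : T.State} {l l' : List T.Black} (h : T.CWWalk s l t)
    (h' : T.CWWalk s l' t') (hl : l.Perm l') : t = t' :=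
  State.ext_phase fun w => by rw [h.phase_eq, h'.phase_eq, turns, turns, hl.countP_eq]

lemma CWWalk.left_unique {s s' t : T.State} {l : List T.Black} (h : T.CWWalk s l t)
    (h' : T.CWWalk s' l t) : s = s' :=
  State.ext_phase fun w => add_right_cancel (h.phase_eq w ▸ h'.phase_eq w)

/-- A white triangle is rotated by its three black neighbours in cyclic order: along a path of
clockwise moves from `s`, the `j`-th move rotating `w` is about `wadj w (s.phase w + j + 2)`. -/
lemma CWWalk.wadj_mem {s t : T.State} {l : List T.Black} (h : T.CWWalk s l t) {w : T.White}
    {j : ℕ} (hj : j < turns w l) : T.wadj w (s.phase w + j + 2) ∈ l := by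
  induction l generalizing s j with
  | nil => simp [turns] at hj
  | cons b l ih =>
    obtain ⟨s', hmove, hl⟩ := cwWalk_cons_iff.mp h
    rw [turns_cons] at hj
    by_cases hw : Incident b w
    · rw [if_pos hw] at hj
      obtain ⟨c, rfl⟩ := hw
      rcases j with _ | j
      · have hc : s.phase (T.badj b c) + ((0 : ℕ) : Fin 3) + 2 = c := by
          rw [State.isCW_iff.mp hmove.1 c]; grind
        rw [hc, T.wadj_badj]
        exact List.mem_cons_self
      · have := ih hl (j := j) (by omega)
        rw [hmove.phase_eq, if_pos ⟨c, rfl⟩] at this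
        exact List.mem_cons_of_mem _ (by convert this using 2; push_cast; ring)
    · rw [if_neg hw, add_zero] at hj
      have := ih hl hj
      rw [hmove.phase_eq, if_neg hw, add_zero] at this
      exact List.mem_cons_of_mem _ this

lemma CWWalk.wadj_mem_of_phase_eq {s t : T.State} {l : List T.Black} (h : T.CWWalk s l t)
    {w : T.White} (hphase : t.phase w = s.phase w) (hturns : turns w l ≠ 0) (c : Fin 3) :
    T.wadj w c ∈ l := by
  have hmod : turns w l % 3 = 0 := by
    have := h.phase_eq w
    rw [hphase, left_eq_add] at this
    simpa using congrArg Fin.val this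
  have hj : (c - s.phase w - 2 : Fin 3).val < turns w l := by omega
  have hc : s.phase w + ((c - s.phase w - 2 : Fin 3).val : Fin 3) + 2 = c := by
    rw [Fin.cast_val_eq_self]; abel
  simpa only [hc] using h.wadj_mem hj

lemma CWWalk.mem_of_cycle (hconn : ∀ w w' : T.White, Relation.ReflTransGen T.WAdj w w')
    {s : T.State} {l : List T.Black} (h : T.CWWalk s l s) (hl : l ≠ []) (b : T.Black) : b ∈ l := by
  have hsat : ∀ w, turns w l ≠ 0 → ∀ c, T.wadj w c ∈ l := fun w =>
    h.wadj_mem_of_phase_eq rfl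
  obtain ⟨b₀, hb₀⟩ := List.exists_mem_of_ne_nil l hl
  have hall : ∀ w, ∀ c, T.wadj w c ∈ l := fun w => by
    induction hconn (T.badj b₀ 0) w with
    | refl => exact hsat _ (turns_ne_zero hb₀ ⟨0, rfl⟩)
    | tail _ hadj ih =>
      obtain ⟨c, c', he⟩ := hadj
      exact hsat _ (turns_ne_zero (ih c) (he ▸ incident_wadj _ c'))
  simpa only [T.wadj_badj] using hall (T.badj b 0) 0

lemma CWWalk.exists_of_phase_eq (hout : T.outer = none) {t x u : T.State} {l : List T.Black}
    (h : T.CWWalk t l x) (hu : ∀ m ∈ l, ∀ w, Incident m w → u.phase w = t.phase w) :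
    ∃ x', T.CWWalk u l x' := by
  induction l generalizing t u with
  | nil => exact ⟨u, cwWalk_nil_iff.mpr rfl⟩
  | cons b l ih =>
    obtain ⟨t', hmove, hl⟩ := cwWalk_cons_iff.mp h
    have hb : u.IsCW b := State.isCW_iff.mpr fun c => by
      rw [hu b List.mem_cons_self _ ⟨c, rfl⟩, State.isCW_iff.mp hmove.1]
    obtain ⟨u', hmove'⟩ := exists_cwMoveAt hout hb
    obtain ⟨x', hx'⟩ := ih hl (u := u') fun m hm w hw => by
      rw [hmove.phase_eq, hmove'.phase_eq, hu m (List.mem_cons_of_mem _ hm) w hw]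
    exact ⟨x', cwWalk_cons_iff.mpr ⟨u', hmove', hx'⟩⟩

lemma cwWalk_cons_iff_append (hout : T.outer = none) {x y : T.State} {b : T.Black}
    {l : List T.Black} (hl : ∀ w, Incident b w → turns w l = 0) :
    T.CWWalk x (b :: l) y ↔ T.CWWalk x (l ++ [b]) y := by
  have hdisj : ∀ m ∈ l, ∀ w, Incident m w → ¬ Incident b w := fun m hm w hmw hbw =>
    turns_ne_zero hm hmw (hl w hbw)
  have hcw : ∀ {z : T.State}, T.CWWalk x l z → (x.IsCW b ↔ z.IsCW b) := fun hz => by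
    simp only [State.isCW_iff, hz.phase_eq, hl _ ⟨_, rfl⟩, Nat.cast_zero, add_zero]
  constructor
  · intro h
    obtain ⟨x', hmove, hx'⟩ := cwWalk_cons_iff.mp h
    obtain ⟨z, hz⟩ := hx'.exists_of_phase_eq hout (u := x) fun m hm w hw => by
      rw [hmove.phase_eq, if_neg (hdisj m hm w hw), add_zero]
    obtain ⟨y', hmove'⟩ := exists_cwMoveAt hout ((hcw hz).mp hmove.1)
    have hy' : T.CWWalk x (l ++ [b]) y' :=
      cwWalk_append_iff.mpr ⟨z, hz, cwWalk_singleton_iff.mpr hmove'⟩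
    rwa [← hy'.eq_of_perm h (List.perm_append_singleton b l)]
  · intro h
    obtain ⟨z, hz, hmove⟩ := cwWalk_append_iff.mp h
    obtain ⟨x', hmove'⟩ := exists_cwMoveAt hout ((hcw hz).mpr (cwWalk_singleton_iff.mp hmove).1)
    obtain ⟨y', hy'⟩ := hz.exists_of_phase_eq hout (u := x') fun m hm w hw => by
      rw [hmove'.phase_eq, if_neg (hdisj m hm w hw), add_zero]
    have hy'' : T.CWWalk x (b :: l) y' := cwWalk_cons_iff.mpr ⟨x', hmove', hy'⟩
    rwa [← hy''.eq_of_perm h (List.perm_append_singleton b l).symm]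

lemma CWWalk.turns_eq_zero_of_not_mem {t x : T.State} {l : List T.Black} (h : T.CWWalk t l x)
    {b : T.Black} (hb : t.IsCW b) (hbl : b ∉ l) {w : T.White} (hw : Incident b w) :
    turns w l = 0 := by
  by_contra hne
  obtain ⟨c, rfl⟩ := hw
  have hfirst := h.wadj_mem (w := T.badj b c) (j := 0) (Nat.pos_of_ne_zero hne)
  have hc : t.phase (T.badj b c) + ((0 : ℕ) : Fin 3) + 2 = c := by
    rw [State.isCW_iff.mp hb c]; grind
  rw [hc, T.wadj_badj] at hfirst
  exact hbl hfirst

lemma CWMoveAt.recurrent_target (hout : T.outer = none)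
    (hconn : ∀ w w' : T.White, Relation.ReflTransGen T.WAdj w w') {t u : T.State} {b : T.Black}
    (hmove : T.CWMoveAt t u b) (ht : T.Recurrent t) : T.Recurrent u := by
  obtain ⟨L, hL, hcycle⟩ := ht
  obtain ⟨α, β, hbα, rfl, -⟩ := List.exists_erase_eq (hcycle.mem_of_cycle hconn hL b)
  obtain ⟨y, hαb, hβ⟩ := (cwWalk_append_iff (l₁ := α ++ [b])).mp (by simpa using hcycle)
  obtain ⟨x, hα, -⟩ := cwWalk_append_iff.mp hαb
  obtain ⟨u', hmove', hα'⟩ := cwWalk_cons_iff.mp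
    ((cwWalk_cons_iff_append hout fun w => hα.turns_eq_zero_of_not_mem hmove.1 hbα).mpr hαb)
  obtain rfl : u = u' :=
    (cwWalk_singleton_iff.mpr hmove).eq_of_perm (cwWalk_singleton_iff.mpr hmove') (.refl _)
  refine ⟨α ++ β ++ [b], by simp, ?_⟩
  exact cwWalk_append_iff.mpr ⟨t, cwWalk_append_iff.mpr ⟨y, hα', hβ⟩,
    cwWalk_singleton_iff.mpr hmove⟩

lemma CWMoveAt.recurrent_source (hout : T.outer = none)
    (hconn : ∀ w w' : T.White, Relation.ReflTransGen T.WAdj w w') {t u : T.State} {b : T.Black}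
    (hmove : T.CWMoveAt t u b) (hu : T.Recurrent u) : T.Recurrent t := by
  obtain ⟨L, hL, hcycle⟩ := hu
  obtain ⟨β', α', hbβ, hL', -⟩ :=
    List.exists_erase_eq (List.mem_reverse.mpr (hcycle.mem_of_cycle hconn hL b))
  obtain rfl : L = α'.reverse ++ b :: β'.reverse := by
    simpa using congrArg List.reverse hL'
  obtain ⟨x, hα, hbβ'⟩ := cwWalk_append_iff.mp hcycle
  obtain ⟨y, hmove', hβ⟩ := cwWalk_cons_iff.mp hbβ'
  have hβb : T.CWWalk x (β'.reverse ++ [b]) u := by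
    refine (cwWalk_cons_iff_append hout fun w hw => ?_).mp hbβ'
    by_contra hne
    obtain ⟨c, rfl⟩ := hw
    refine hbβ (List.mem_reverse.mp ?_)
    simpa only [T.wadj_badj] using
      hβ.wadj_mem_of_phase_eq (by rw [hmove.phase_badj, hmove'.phase_badj]) hne c
  obtain ⟨t', hβ', hmove''⟩ := cwWalk_append_iff.mp hβb
  obtain rfl : t' = t := hmove''.left_unique (cwWalk_singleton_iff.mpr hmove)
  exact ⟨b :: (α'.reverse ++ β'.reverse), by simp,
    cwWalk_cons_iff.mpr ⟨u, hmove, cwWalk_append_iff.mpr ⟨x, hα, hβ'⟩⟩⟩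

lemma CWMoveAt.recurrent_iff (hout : T.outer = none)
    (hconn : ∀ w w' : T.White, Relation.ReflTransGen T.WAdj w w') {t u : T.State} {b : T.Black}
    (hmove : T.CWMoveAt t u b) : T.Recurrent t ↔ T.Recurrent u :=
  ⟨hmove.recurrent_target hout hconn, hmove.recurrent_source hout hconn⟩

lemma Walk.recurrent_iff (hout : T.outer = none)
    (hconn : ∀ w w' : T.White, Relation.ReflTransGen T.WAdj w w') {s t : T.State}
    {l : List (T.Black × Bool)} (h : T.Walk s l t) : T.Recurrent s ↔ T.Recurrent t := by
  induction h with
  | nil => rfl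
  | cw hmove _ ih => exact (hmove.recurrent_iff hout hconn).trans ih
  | ccw hmove _ ih => exact (hmove.recurrent_iff hout hconn).symm.trans ih

/-- Between two moves about `b` the phase of each white triangle around `b` returns, so all three
of its black neighbours are moved in between. -/
lemma CWWalk.wadj_mem_of_repeat {s x : T.State} {l : List T.Black} {b : T.Black}
    (h : T.CWWalk s (l ++ [b]) x) (hb : b ∈ l) {w : T.White} (hw : Incident b w) (c : Fin 3) :
    T.wadj w c ∈ l := by
  obtain ⟨l₁, l₂, rfl⟩ := List.append_of_mem hb
  obtain ⟨a, -, hbl₂⟩ := cwWalk_append_iff.mp (by simpa using h)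
  obtain ⟨x₀, hbl₂, hb'⟩ := (cwWalk_append_iff (l₁ := b :: l₂)).mp (by simpa using hbl₂)
  obtain ⟨c₀, rfl⟩ := hw
  have hphase : x₀.phase (T.badj b c₀) = a.phase (T.badj b c₀) := by
    obtain ⟨a', hmove, -⟩ := cwWalk_cons_iff.mp hbl₂
    rw [State.isCW_iff.mp (cwWalk_singleton_iff.mp hb').1, State.isCW_iff.mp hmove.1]
  have := hbl₂.wadj_mem_of_phase_eq hphase (turns_ne_zero List.mem_cons_self ⟨c₀, rfl⟩) c
  exact List.mem_append_right _ this

lemma CWWalk.exists_dedup (hout : T.outer = none) {s x : T.State} {l : List T.Black}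
    (h : T.CWWalk s l x) :
    -- `List.dedup` keeps last occurrences, so this keeps the first occurrence of each move
    ∃ y, T.CWWalk s l.reverse.dedup.reverse y ∧
      ∀ w, y.phase w = x.phase w ∨ ∀ c, T.wadj w c ∈ l := by
  induction l using List.reverseRecOn generalizing x with
  | nil =>
    obtain rfl := cwWalk_nil_iff.mp h
    exact ⟨s, h, fun w => .inl rfl⟩
  | append_singleton l b ih =>
    obtain ⟨x₀, hl, hb⟩ := cwWalk_append_iff.mp h
    have hmove := cwWalk_singleton_iff.mp hb
    obtain ⟨y₀, hy₀, hagree⟩ := ih hl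
    have hagree' : ∀ w, ¬ Incident b w → x.phase w = x₀.phase w := fun w hw => by
      rw [hmove.phase_eq, if_neg hw, add_zero]
    rw [List.reverse_dedup_reverse_concat]
    split_ifs with hbl
    · refine ⟨y₀, hy₀, fun w => ?_⟩
      by_cases hw : Incident b w
      · exact .inr fun c => List.mem_append_left _ (h.wadj_mem_of_repeat hbl hw c)
      · rw [hagree' w hw]
        exact (hagree w).imp_right fun hsat c => List.mem_append_left _ (hsat c)
    · have hcw : y₀.IsCW b := State.isCW_iff.mpr fun c => by
        rcases hagree (T.badj b c) with he | hsat
        · rw [he, State.isCW_iff.mp hmove.1]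
        · exact absurd (by simpa only [T.wadj_badj] using hsat c) hbl
      obtain ⟨y, hmove'⟩ := exists_cwMoveAt hout hcw
      refine ⟨y, cwWalk_append_iff.mpr ⟨y₀, hy₀, cwWalk_singleton_iff.mpr hmove'⟩, fun w => ?_⟩
      rw [hmove.phase_eq, hmove'.phase_eq]
      exact (hagree w).imp (congrArg (· + _)) fun hsat c => List.mem_append_left _ (hsat c)

lemma CWWalk.exists_isCW_of_mem {s t : T.State} {l : List T.Black} (h : T.CWWalk s l t)
    {b : T.Black} (hb : b ∈ l) : ∃ x : T.State, x.IsCW b := by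
  obtain ⟨l₁, l₂, rfl⟩ := List.append_of_mem hb
  obtain ⟨x, -, hbl₂⟩ := cwWalk_append_iff.mp h
  obtain ⟨_, hmove, -⟩ := cwWalk_cons_iff.mp hbl₂
  exact ⟨x, hmove.1⟩

lemma turns_eq_three {l : List T.Black} (hl : l.Nodup) (hall : ∀ b, b ∈ l) {w : T.White}
    (hw : Function.Injective (T.wadj w)) : turns w l = 3 := by
  have hfilter : Finset.univ.filter (Incident · w) = Finset.univ.image (T.wadj w) := by
    ext b
    simp [incident_iff]
  rw [turns, List.countP_eq_card_filter_univ _ hl hall, hfilter,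
    Finset.card_image_of_injective _ hw, Finset.card_univ, Fintype.card_fin]

lemma CWWalk.exists_nodup_cycle (hout : T.outer = none)
    (hconn : ∀ w w' : T.White, Relation.ReflTransGen T.WAdj w w') {s : T.State}
    {L : List T.Black} (hL : L ≠ []) (h : T.CWWalk s L s) :
    ∃ l : List T.Black, l.Nodup ∧ (∀ b, b ∈ l) ∧ T.CWWalk s l s := by
  have hall : ∀ b, b ∈ L.reverse.dedup.reverse := by simpa using h.mem_of_cycle hconn hL
  have hnodup : L.reverse.dedup.reverse.Nodup := List.nodup_reverse.mpr (List.nodup_dedup _)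
  obtain ⟨y, hy, hagree⟩ := h.exists_dedup hout
  refine ⟨_, hnodup, hall, ?_⟩
  convert hy
  refine State.ext_phase fun w => (hagree w).elim Eq.symm fun _ => ?_
  have hinj : Function.Injective (T.wadj w) := fun c c' hc => by
    obtain ⟨x, hx⟩ := hy.exists_isCW_of_mem (hall (T.wadj w c))
    exact hx.badj_injective (by rw [T.badj_wadj, hc, T.badj_wadj])
  rw [hy.phase_eq, turns_eq_three hnodup hall hinj]
  simp

end Trinity

theorem cyclic_state_recurs_after_one_turn_general
    (T : Trinity) (ht : T.Toric) (s : T.State)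
    (hcyc : ∃ s₀ : T.State, T.Reaches s s₀ ∧ T.Recurrent s₀) :
    ∃ l : List T.Black, l.Nodup ∧ (∀ b : T.Black, b ∈ l) ∧ T.CWWalk s l s := by
  obtain ⟨⟨hconn, -⟩, hout, -⟩ := ht
  obtain ⟨s₀, ⟨_, hwalk⟩, hrec⟩ := hcyc
  obtain ⟨L, hL, hcycle⟩ := (hwalk.recurrent_iff hout hconn).mpr hrec
  exact hcycle.exists_nodup_cycle hout hconn hL

/-- Theorem 6.7.  Let `T` be an irreducible toric trinity.
For any state `s` lying in a cyclic connected component of the state transition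
graph of `T`, there is a linear ordering of the black triangles of `T` (a list
enumerating each black triangle exactly once) such that, starting from `s`,
clockwise moves can be performed on the black triangles consecutively in that
order, and after these moves the state `s` recurs. -/
theorem cyclic_state_recurs_after_one_turn
    (T : Trinity) (ht : T.Toric) (hirr : T.Irreducible) (s : T.State)
    (hcyc : ∃ s₀ : T.State, T.Reaches s s₀ ∧ T.Recurrent s₀) :
    ∃ l : List T.Black, l.Nodup ∧ (∀ b : T.Black, b ∈ l) ∧ T.CWWalk s l s :=
  cyclic_state_recurs_after_one_turn_general T ht s hcyc
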